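/- arXiv:2408.11015 — 6 statements merged into one kernel-verified Lean document; each statement's English description precedes it below -/
import Mathlib

section
/- Let ≾ be a well-founded preorder on a set B, and define the pointwise preorder on functions A → B by f ≾* g iff f(a) ≾ g(a) for all a ∈ A. Then for every nonempty ≾*-chain 𝒞 of functions A → B there exists a function h : A → B such that (i) for every a ∈ A, h(a) ∈ {f(a) : f ∈ 𝒞}, and (ii) h is a ≾*-lower bound of 𝒞, i.e., h(a) ≾ f(a) for all f ∈ 𝒞 and a ∈ A. -/
/-- A nonempty chain of functions (ordered pointwise by a well-founded preorder)
has a pointwise lower bound whose values are all taken from members of the chain. -/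
theorem wf_pointwise_chain_lower_bound {A B : Type*} (r : B → B → Prop)
    (hrefl : ∀ a, r a a) (htrans : ∀ a b c, r a b → r b c → r a c)
    (hwf : ∀ S : Set B, S.Nonempty → ∃ x ∈ S, ∀ y ∈ S, r y x → r x y)
    (𝒞 : Set (A → B)) (hne : 𝒞.Nonempty)
    (hchain : ∀ f ∈ 𝒞, ∀ g ∈ 𝒞, (∀ a, r (f a) (g a)) ∨ (∀ a, r (g a) (f a))) :
    ∃ h : A → B, (∀ a, ∃ f ∈ 𝒞, h a = f a) ∧ (∀ f ∈ 𝒞, ∀ a, r (h a) (f a)) := by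
  have key : ∀ a : A, ∃ x : B, (∃ f ∈ 𝒞, x = f a) ∧ ∀ f ∈ 𝒞, r x (f a) := by
    intro a
    obtain ⟨x, hxS, hmin⟩ := hwf {b | ∃ f ∈ 𝒞, b = f a}
      (by obtain ⟨f, hf⟩ := hne; exact ⟨f a, f, hf, rfl⟩)
    refine ⟨x, hxS, fun f hf => ?_⟩
    obtain ⟨g, hg, rfl⟩ := hxS
    rcases hchain f hf g hg with h1 | h2
    · exact hmin (f a) ⟨f, hf, rfl⟩ (h1 a)
    · exact h2 a
  choose h h1 h2 using key
  exact ⟨h, h1, fun f hf a => h2 a f hf⟩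
end

section
/- Let A be a set with an arbitrary binary relation P (intended: the prefix relation on executions), let B be a set with a well-founded preorder ≾, let Q : A → B → Prop be a pointwise predicate, and let R be a binary relation on B such that the equivalence ∼ = ≾ ∩ ≾⁻¹ is a congruence w.r.t. R. Let 𝓛 = { f : A → B | (∀ a, Q a (f a)) ∧ (∀ a₁ a₂, P a₁ a₂ → R (f a₁) (f a₂)) }. If 𝓛 is nonempty, then 𝓛 contains an element that is minimal with respect to the pointwise lift of ≾ restricted to 𝓛. -/
/-- Existence of minimal linearization mappings (preorder version):
if the set 𝓛 of mappings that pointwise satisfy `Q` and respect `R` on `P`-related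
pairs is nonempty, then it contains a pointwise-minimal element. -/
theorem exists_minimal_linearization_preorder {A B : Type*}
    (P : A → A → Prop) (r : B → B → Prop)
    (hrefl : ∀ b, r b b) (htrans : ∀ a b c, r a b → r b c → r a c)
    (hwf : ∀ S : Set B, S.Nonempty → ∃ x ∈ S, ∀ y ∈ S, r y x → r x y)
    (Q : A → B → Prop) (R : B → B → Prop)
    (hcong : ∀ b b' c c' : B, (r b b' ∧ r b' b) → (r c c' ∧ r c' c) → (R b c ↔ R b' c'))
    (hne : ∃ f : A → B, (∀ a, Q a (f a)) ∧ ∀ a₁ a₂, P a₁ a₂ → R (f a₁) (f a₂)) :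
    ∃ f : A → B, ((∀ a, Q a (f a)) ∧ ∀ a₁ a₂, P a₁ a₂ → R (f a₁) (f a₂)) ∧
      ∀ g : A → B, ((∀ a, Q a (g a)) ∧ ∀ a₁ a₂, P a₁ a₂ → R (g a₁) (g a₂)) →
        (∀ a, r (g a) (f a)) → (∀ a, r (f a) (g a)) := by
  classical
  obtain ⟨f₀, hf₀⟩ := hne
  let L : Set (A → B) := {f | (∀ a, Q a (f a)) ∧ ∀ a₁ a₂, P a₁ a₂ → R (f a₁) (f a₂)}
  let rel : L → L → Prop := fun f g => ∀ a, r (g.1 a) (f.1 a)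
  have key : ∃ m : L, ∀ x, rel m x → rel x m := by
    apply exists_maximal_of_chains_bounded (r := rel)
    · intro c hc
      by_cases hcne : c.Nonempty
      · -- pointwise minimization over the chain
        have hSne : ∀ a : A, (Set.image (fun g : L => g.1 a) c).Nonempty := fun a =>
          hcne.image _
        let h : A → B := fun a => (hwf _ (hSne a)).choose
        have hmem : ∀ a, h a ∈ Set.image (fun g : L => g.1 a) c := fun a =>
          (hwf _ (hSne a)).choose_spec.1
        have hminS : ∀ a, ∀ y ∈ Set.image (fun g : L => g.1 a) c, r y (h a) → r (h a) y :=
          fun a => (hwf _ (hSne a)).choose_spec.2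
        -- h is a pointwise lower bound of the chain
        have hlb : ∀ g ∈ c, ∀ a, r (h a) (g.1 a) := by
          intro g hg a
          obtain ⟨g', hg', hg'a⟩ := hmem a
          by_cases hgg : g' = g
          · rw [← hg'a, hgg]; exact hrefl _
          · rcases hc hg' hg hgg with hcmp | hcmp
            · -- rel g' g : ∀ x, r (g x) (g' x)
              exact hminS a _ ⟨g, hg, rfl⟩ (by rw [← hg'a]; exact hcmp a)
            · -- rel g g' : ∀ x, r (g' x) (g x)
              rw [← hg'a]; exact hcmp a
        have hequiv : ∀ g ∈ c, ∀ a, r (g.1 a) (h a) → (r (h a) (g.1 a) ∧ r (g.1 a) (h a)) :=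
          fun g hg a hr => ⟨hlb g hg a, hr⟩
        -- h belongs to L
        have hhL : h ∈ L := by
          constructor
          · intro a
            obtain ⟨g, hg, hga⟩ := hmem a
            rw [← hga]; exact g.2.1 a
          · intro a₁ a₂ hP
            obtain ⟨g₁, hg₁, hga₁⟩ := hmem a₁
            obtain ⟨g₂, hg₂, hga₂⟩ := hmem a₂
            by_cases hgg : g₁ = g₂
            · rw [← hga₁, ← hga₂, hgg]; exact g₂.2.2 a₁ a₂ hP
            · rcases hc hg₁ hg₂ hgg with hcmp | hcmp
              · -- rel g₁ g₂ : ∀ x, r (g₂ x) (g₁ x); g₂ is smaller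
                have e1 : r (g₂.1 a₁) (h a₁) ∧ r (h a₁) (g₂.1 a₁) := by
                  have := hequiv g₂ hg₂ a₁ (by rw [← hga₁]; exact hcmp a₁)
                  exact ⟨this.2, this.1⟩
                have e2 : r (g₂.1 a₂) (h a₂) ∧ r (h a₂) (g₂.1 a₂) := by
                  rw [← hga₂]; exact ⟨hrefl _, hrefl _⟩
                exact (hcong _ _ _ _ e1 e2).mp (g₂.2.2 a₁ a₂ hP)
              · -- rel g₂ g₁ : ∀ x, r (g₁ x) (g₂ x); g₁ is smaller
                have e1 : r (g₁.1 a₁) (h a₁) ∧ r (h a₁) (g₁.1 a₁) := by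
                  rw [← hga₁]; exact ⟨hrefl _, hrefl _⟩
                have e2 : r (g₁.1 a₂) (h a₂) ∧ r (h a₂) (g₁.1 a₂) := by
                  have := hequiv g₁ hg₁ a₂ (by rw [← hga₂]; exact hcmp a₂)
                  exact ⟨this.2, this.1⟩
                exact (hcong _ _ _ _ e1 e2).mp (g₁.2.2 a₁ a₂ hP)
        exact ⟨⟨h, hhL⟩, fun g hg a => hlb g hg a⟩
      · exact ⟨⟨f₀, hf₀⟩, fun g hg => absurd ⟨g, hg⟩ hcne⟩
    · intro a b c hab hbc x
      exact htrans _ _ _ (hbc x) (hab x)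
  obtain ⟨⟨f, hfL⟩, hmin⟩ := key
  exact ⟨f, hfL, fun g hg hgle => hmin ⟨g, hg⟩ hgle⟩
end

section
/- Let A be a set with a binary relation P, let B be a set with a well-founded partial order ⪯, let Q : A → B → Prop, and let R be any binary relation on B. Let 𝓛 = { f : A → B | (∀ a, Q a (f a)) ∧ (∀ a₁ a₂, P a₁ a₂ → R (f a₁) (f a₂)) }. If 𝓛 is nonempty, then 𝓛 contains a ⪯-pointwise-minimal element, i.e., f ∈ 𝓛 such that no g ∈ 𝓛 satisfies g ⪯* f and g ≠ f (where ⪯* is the pointwise lift). -/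
/-- Existence of minimal linearization mappings (partial order version):
for a well-founded partial order, 𝓛 nonempty implies 𝓛 contains a
pointwise-minimal element (no strictly pointwise-smaller member exists). -/
theorem exists_minimal_linearization_partial_order {A B : Type*}
    (P : A → A → Prop) (le : B → B → Prop)
    (hrefl : ∀ b, le b b) (htrans : ∀ a b c, le a b → le b c → le a c)
    (hantisymm : ∀ a b, le a b → le b a → a = b)
    (hwf : ∀ S : Set B, S.Nonempty → ∃ x ∈ S, ∀ y ∈ S, le y x → le x y)
    (Q : A → B → Prop) (R : B → B → Prop)
    (hne : ∃ f : A → B, (∀ a, Q a (f a)) ∧ ∀ a₁ a₂, P a₁ a₂ → R (f a₁) (f a₂)) :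
    ∃ f : A → B, ((∀ a, Q a (f a)) ∧ ∀ a₁ a₂, P a₁ a₂ → R (f a₁) (f a₂)) ∧
      ∀ g : A → B, ((∀ a, Q a (g a)) ∧ ∀ a₁ a₂, P a₁ a₂ → R (g a₁) (g a₂)) →
        (∀ a, le (g a) (f a)) → g ≠ f → False := by
  classical
  set L : Set (A → B) :=
    {f | (∀ a, Q a (f a)) ∧ ∀ a₁ a₂, P a₁ a₂ → R (f a₁) (f a₂)} with hL
  -- relation on the subtype: r f g means g is pointwise ≤ f (so r-maximal = minimal)
  let r : L → L → Prop := fun f g => ∀ a, le (g.1 a) (f.1 a)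
  have hchains : ∀ c : Set L, IsChain r c → ∃ ub : L, ∀ f ∈ c, r f ub := by
    intro c hc
    rcases Set.eq_empty_or_nonempty c with hce | ⟨f₀, hf₀⟩
    · obtain ⟨f, hf⟩ := hne
      exact ⟨⟨f, hf⟩, by simp [hce]⟩
    · -- coordinate-wise minima
      have hmin : ∀ a : A, ∃ x : B, (∃ f ∈ c, f.1 a = x) ∧
          ∀ y : B, (∃ f ∈ c, f.1 a = y) → le x y := by
        intro a
        obtain ⟨x, hxS, hxmin⟩ := hwf {b | ∃ f ∈ c, f.1 a = b} ⟨f₀.1 a, f₀, hf₀, rfl⟩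
        refine ⟨x, hxS, ?_⟩
        rintro y ⟨f', hf', rfl⟩
        obtain ⟨f, hf, rfl⟩ := hxS
        rcases eq_or_ne f f' with rfl | hne'
        · exact hrefl _
        · rcases hc hf hf' hne' with h | h
          · exact hxmin _ ⟨f', hf', rfl⟩ (h a)
          · exact h a
      choose g hgmem hgmin using hmin
      have hgL : g ∈ L := by
        constructor
        · intro a
          obtain ⟨f, _, hfa⟩ := hgmem a
          rw [← hfa]; exact f.2.1 a
        · intro a₁ a₂ hP
          obtain ⟨f₁, hf₁c, hf₁⟩ := hgmem a₁
          obtain ⟨f₂, hf₂c, hf₂⟩ := hgmem a₂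
          have htot : r f₁ f₂ ∨ r f₂ f₁ := by
            rcases eq_or_ne f₁ f₂ with rfl | hne'
            · exact Or.inl fun a => hrefl _
            · exact hc hf₁c hf₂c hne'
          rcases htot with h | h
          · -- f₂ pointwise ≤ f₁
            have h1 : f₂.1 a₁ = g a₁ := by
              apply hantisymm
              · rw [← hf₁]; exact h a₁
              · exact hgmin a₁ _ ⟨f₂, hf₂c, rfl⟩
            rw [← h1, ← hf₂]; exact f₂.2.2 _ _ hP
          · -- f₁ pointwise ≤ f₂
            have h2 : f₁.1 a₂ = g a₂ := by
              apply hantisymm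
              · rw [← hf₂]; exact h a₂
              · exact hgmin a₂ _ ⟨f₁, hf₁c, rfl⟩
            rw [← h2, ← hf₁]; exact f₁.2.2 _ _ hP
      exact ⟨⟨g, hgL⟩, fun f hf a => hgmin a _ ⟨f, hf, rfl⟩⟩
  have htr : ∀ {x y z : L}, r x y → r y z → r x z :=
    fun hxy hyz a => htrans _ _ _ (hyz a) (hxy a)
  obtain ⟨m, hm⟩ := exists_maximal_of_chains_bounded hchains htr
  refine ⟨m.1, m.2, fun g hg hle hne' => ?_⟩
  have := hm ⟨g, hg⟩ hle
  exact hne' (funext fun a => hantisymm _ _ (hle a) (this a))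
end

section
/- Let α be a type, W : α → Prop a decidable predicate, and s₁, s₂ lists over α with no duplicates. Suppose (i) every element of s₁ is an element of s₂, and (ii) for all a, b with W a, if a appears strictly before b in s₁ then a appears strictly before b in s₂. Then the list s₁ filtered to elements satisfying W is a sublist of s₂ filtered to elements satisfying W. -/
/-!
Since `s₂` has no duplicates, "strictly before in `s₂`" is the strict order
`a ↦ s₂.idxOf a`. The `W`-part of `s₁` is increasing for this order (by the hypothesis on
`W`-elements) and contained in `s₂`, which is itself increasing; a list that is increasing for a
strict order and contained in another increasing list is a sublist of it. Filtering both sides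
by `W` finishes the proof.
-/

def StrictlyBefore {α : Type*} (l : List α) (a b : α) : Prop :=
  ∃ i j : ℕ, i < j ∧ l[i]? = some a ∧ l[j]? = some b

namespace List

variable {α : Type*}

theorem pairwise_strictlyBefore (l : List α) : l.Pairwise (StrictlyBefore l) := by
  rw [pairwise_iff_getElem]
  intro i j hi hj hij
  exact ⟨i, j, hij, getElem?_eq_getElem hi, getElem?_eq_getElem hj⟩

theorem Nodup.idxOf_lt_of_strictlyBefore [DecidableEq α] {l : List α} (h : l.Nodup) {a b : α}
    (hab : StrictlyBefore l a b) : l.idxOf a < l.idxOf b := by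
  obtain ⟨i, j, hij, ha, hb⟩ := hab
  obtain ⟨hj, rfl⟩ := getElem?_eq_some_iff.1 hb
  obtain ⟨hi, rfl⟩ := getElem?_eq_some_iff.1 ha
  rwa [h.idxOf_getElem, h.idxOf_getElem]

theorem sublist_of_subset_of_pairwise_lt_on {β : Type*} [Preorder β] (f : α → β)
    {l₁ l₂ : List α} (hsub : l₁ ⊆ l₂) (h₁ : l₁.Pairwise (f · < f ·))
    (h₂ : l₂.Pairwise (f · < f ·)) : l₁ <+ l₂ := by
  obtain ⟨l, hperm, hl⟩ := subperm_of_subset (h₁.nodup (r := (f · < f ·))) hsub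
  have : l = l₁ := hperm.eq_of_pairwise
    (fun _ _ _ _ hab hba => absurd hba (lt_asymm hab)) (h₂.sublist hl) h₁
  exact this ▸ hl

theorem Nodup.sublist_of_subset_of_pairwise_strictlyBefore {l₁ l₂ : List α} (h₂ : l₂.Nodup)
    (hsub : l₁ ⊆ l₂) (h₁ : l₁.Pairwise (StrictlyBefore l₂)) : l₁ <+ l₂ := by
  classical
  exact sublist_of_subset_of_pairwise_lt_on l₂.idxOf hsub
    (h₁.imp h₂.idxOf_lt_of_strictlyBefore)
    ((pairwise_strictlyBefore l₂).imp h₂.idxOf_lt_of_strictlyBefore)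

end List

theorem wstar_imp_filter_sublist_general {α : Type*} (W : α → Prop) [DecidablePred W]
    (s₁ s₂ : List α) (h₂ : s₂.Nodup)
    (hmem : ∀ a ∈ s₁, a ∈ s₂)
    (horder : ∀ a b, W a → StrictlyBefore s₁ a b → StrictlyBefore s₂ a b) :
    (s₁.filter fun a => decide (W a)).Sublist (s₂.filter fun a => decide (W a)) := by
  set t := s₁.filter fun a => decide (W a)
  have hsub : t ⊆ s₂ := fun a ha => hmem a (List.mem_filter.1 ha).1
  have hpw : t.Pairwise (StrictlyBefore s₂) :=
    ((List.pairwise_strictlyBefore s₁).sublist List.filter_sublist).imp_of_mem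
      fun ha _ hab => horder _ _ (by simpa using (List.mem_filter.1 ha).2) hab
  have hfilter : t.filter (fun a => decide (W a)) = t := by
    simp [t, List.filter_filter]
  simpa only [hfilter] using
    (h₂.sublist_of_subset_of_pairwise_strictlyBefore hsub hpw).filter fun a => decide (W a)

/-- If `s₁ ≾^{w*} s₂` (membership inclusion plus preservation of the order from
`W`-elements to later elements), then `s₁` restricted to `W` is a sublist of
`s₂` restricted to `W`. -/
theorem wstar_imp_filter_sublist {α : Type*} (W : α → Prop) [DecidablePred W]
    (s₁ s₂ : List α) (h₁ : s₁.Nodup) (h₂ : s₂.Nodup)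
    (hmem : ∀ a ∈ s₁, a ∈ s₂)
    (horder : ∀ a b, W a → StrictlyBefore s₁ a b → StrictlyBefore s₂ a b) :
    (s₁.filter fun a => decide (W a)).Sublist (s₂.filter fun a => decide (W a)) :=
  wstar_imp_filter_sublist_general W s₁ s₂ h₂ hmem horder
end

section
/- Let (S, <) be a strict linear order on a set S, W ⊆ S, and <' another strict linear order on S. Define R(a,b) iff a ≠ b and ∃w ∈ W with a ≤ w ≤ b (w.r.t. <), and rfr(a,b) iff a <' b and neither R(a,b) nor R(b,a). Then T = R ∪ rfr is a strict total order on S: irreflexive, transitive, and for all a ≠ b exactly one of T(a,b), T(b,a) holds. -/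
/-- The union of the "write in between" relation and the response-order relation on
write-free pairs is a strict total order. -/
theorem R_union_rfr_strict_total_order {S : Type*}
    (lt : S → S → Prop)
    (hirr : ∀ a, ¬ lt a a)
    (htrans : ∀ a b c, lt a b → lt b c → lt a c)
    (htricho : ∀ a b, a ≠ b → lt a b ∨ lt b a)
    (lt' : S → S → Prop)
    (hirr' : ∀ a, ¬ lt' a a)
    (htrans' : ∀ a b c, lt' a b → lt' b c → lt' a c)
    (htricho' : ∀ a b, a ≠ b → lt' a b ∨ lt' b a)
    (W : Set S)
    (R : S → S → Prop)
    (hR : ∀ a b, R a b ↔ a ≠ b ∧ ∃ w ∈ W, (lt a w ∨ a = w) ∧ (lt w b ∨ w = b))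
    (rfr : S → S → Prop)
    (hrfr : ∀ a b, rfr a b ↔ lt' a b ∧ ¬ R a b ∧ ¬ R b a)
    (T : S → S → Prop)
    (hT : ∀ a b, T a b ↔ R a b ∨ rfr a b) :
    (∀ a, ¬ T a a) ∧ (∀ a b c, T a b → T b c → T a c) ∧
    (∀ a b, a ≠ b → ((T a b ∧ ¬ T b a) ∨ (T b a ∧ ¬ T a b))) := by
  have hle : ∀ a b c : S, (lt a b ∨ a = b) → (lt b c ∨ b = c) → (lt a c ∨ a = c) := by
    rintro a b c (h1 | rfl) (h2 | rfl)
    · exact Or.inl (htrans _ _ _ h1 h2)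
    · exact Or.inl h1
    · exact Or.inl h2
    · exact Or.inr rfl
  have hRasym : ∀ a b, R a b → ¬ R b a := by
    intro a b hab hba
    obtain ⟨hne, w, hw, h1, h2⟩ := (hR a b).mp hab
    obtain ⟨_, v, hv, h3, h4⟩ := (hR b a).mp hba
    rcases hle _ _ _ h1 h2 with h | h
    · rcases hle _ _ _ h3 h4 with h' | h'
      · exact hirr a (htrans _ _ _ h h')
      · exact hne h'.symm
    · exact hne h
  have hTasym : ∀ a b, T a b → ¬ T b a := by
    intro a b h1 h2
    rcases (hT a b).mp h1 with h1 | h1 <;> rcases (hT b a).mp h2 with h2 | h2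
    · exact hRasym _ _ h1 h2
    · exact ((hrfr b a).mp h2).2.2 h1
    · exact ((hrfr a b).mp h1).2.2 h2
    · exact hirr' a (htrans' _ _ _ ((hrfr a b).mp h1).1 ((hrfr b a).mp h2).1)
  refine ⟨?_, ?_, ?_⟩
  · intro a h
    rcases (hT a a).mp h with h | h
    · exact ((hR a a).mp h).1 rfl
    · exact hirr' a ((hrfr a a).mp h).1
  · intro a b c hab hbc
    rcases (hT a b).mp hab with h1 | h1 <;> rcases (hT b c).mp hbc with h2 | h2
    · obtain ⟨hne1, w, hw, hw1, hw2⟩ := (hR a b).mp h1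
      obtain ⟨hne2, v, hv, hv1, hv2⟩ := (hR b c).mp h2
      have hac : a ≠ c := by rintro rfl; exact hRasym _ _ h2 h1
      exact (hT a c).mpr (Or.inl ((hR a c).mpr
        ⟨hac, w, hw, hw1, hle _ _ _ (hle _ _ _ hw2 hv1) hv2⟩))
    · obtain ⟨hne1, w, hw, hw1, hw2⟩ := (hR a b).mp h1
      obtain ⟨hbc', hnbc, hncb⟩ := (hrfr b c).mp h2
      have hbcne : b ≠ c := by rintro rfl; exact hirr' _ hbc'
      have hac : a ≠ c := by rintro rfl; exact hncb h1
      have hwc : lt w c ∨ w = c := by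
        by_contra hcon
        push_neg at hcon
        have hcw : lt c w := (htricho w c hcon.2).resolve_left hcon.1
        exact hncb ((hR c b).mpr ⟨hbcne.symm, w, hw, Or.inl hcw, hw2⟩)
      exact (hT a c).mpr (Or.inl ((hR a c).mpr ⟨hac, w, hw, hw1, hwc⟩))
    · obtain ⟨hab', hnab, hnba⟩ := (hrfr a b).mp h1
      obtain ⟨hne2, w, hw, hw1, hw2⟩ := (hR b c).mp h2
      have habne : a ≠ b := by rintro rfl; exact hirr' _ hab'
      have hac : a ≠ c := by rintro rfl; exact hnba h2
      have haw : lt a w ∨ a = w := by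
        by_contra hcon
        push_neg at hcon
        have hwa : lt w a := (htricho a w hcon.2).resolve_left hcon.1
        exact hnba ((hR b a).mpr ⟨habne.symm, w, hw, hw1, Or.inl hwa⟩)
      exact (hT a c).mpr (Or.inl ((hR a c).mpr ⟨hac, w, hw, haw, hw2⟩))
    · obtain ⟨hab', hnab, hnba⟩ := (hrfr a b).mp h1
      obtain ⟨hbc', hnbc, hncb⟩ := (hrfr b c).mp h2
      have hac' : lt' a c := htrans' _ _ _ hab' hbc'
      by_cases hRac : R a c
      · exact (hT a c).mpr (Or.inl hRac)
      · have hnca : ¬ R c a := by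
          intro h
          obtain ⟨hne, w, hw, h1', h2'⟩ := (hR c a).mp h
          by_cases hwb : lt w b ∨ w = b
          · exact hncb ((hR c b).mpr ⟨fun h => hirr' _ (h ▸ hbc'), w, hw, h1', hwb⟩)
          · push_neg at hwb
            have hbw : lt b w := (htricho w b hwb.2).resolve_left hwb.1
            exact hnba ((hR b a).mpr
              ⟨fun h => hirr' _ (h ▸ hab'), w, hw, Or.inl hbw, h2'⟩)
        exact (hT a c).mpr (Or.inr ((hrfr a c).mpr ⟨hac', hRac, hnca⟩))
  · intro a b hne
    have htot : T a b ∨ T b a := by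
      by_cases hab : R a b
      · exact Or.inl ((hT a b).mpr (Or.inl hab))
      by_cases hba : R b a
      · exact Or.inr ((hT b a).mpr (Or.inl hba))
      rcases htricho' a b hne with h | h
      · exact Or.inl ((hT a b).mpr (Or.inr ((hrfr a b).mpr ⟨h, hab, hba⟩)))
      · exact Or.inr ((hT b a).mpr (Or.inr ((hrfr b a).mpr ⟨h, hba, hab⟩)))
    rcases htot with h | h
    · exact Or.inl ⟨h, hTasym _ _ h⟩
    · exact Or.inr ⟨h, hTasym _ _ h⟩
end

section
/- With the setup of the previous statement (strict linear orders < and <' on S, W ⊆ S, R(a,b) iff a ≠ b ∧ ∃w∈W, a ≤ w ≤ b, rfr = <' ∖ (R ∪ R⁻¹), T = R ∪ rfr), for every w ∈ W and b ∈ S: T(w,b) holds if and only if w < b. -/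
/-- "Write-then-op": the new total order `T` agrees with the linearization order `lt`
on all pairs whose first component is a write operation. -/
theorem write_then_op {S : Type*}
    (lt : S → S → Prop)
    (hirr : ∀ a, ¬ lt a a)
    (htrans : ∀ a b c, lt a b → lt b c → lt a c)
    (htricho : ∀ a b, a ≠ b → lt a b ∨ lt b a)
    (lt' : S → S → Prop)
    (hirr' : ∀ a, ¬ lt' a a)
    (htrans' : ∀ a b c, lt' a b → lt' b c → lt' a c)
    (htricho' : ∀ a b, a ≠ b → lt' a b ∨ lt' b a)
    (W : Set S)
    (R : S → S → Prop)
    (hR : ∀ a b, R a b ↔ a ≠ b ∧ ∃ w ∈ W, (lt a w ∨ a = w) ∧ (lt w b ∨ w = b))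
    (rfr : S → S → Prop)
    (hrfr : ∀ a b, rfr a b ↔ lt' a b ∧ ¬ R a b ∧ ¬ R b a)
    (T : S → S → Prop)
    (hT : ∀ a b, T a b ↔ R a b ∨ rfr a b) :
    ∀ w ∈ W, ∀ b : S, (T w b ↔ lt w b) := by
  intro w hw b
  rw [hT, hR, hrfr, hR, hR]
  constructor
  · rintro (⟨hne, w', hw', h1, h2⟩ | ⟨hlt', hnr1, hnr2⟩)
    · rcases h1 with h1 | rfl
      · rcases h2 with h2 | rfl
        · exact htrans _ _ _ h1 h2
        · exact h1
      · rcases h2 with h2 | rfl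
        · exact h2
        · exact absurd rfl hne
    · by_contra hnb
      have hbw : b ≠ w := fun h => hirr' w (h ▸ hlt')
      rcases htricho w b (fun h => hirr' w (h ▸ hlt')) with h | h
      · exact hnr1 ⟨fun h' => hirr' w (h' ▸ hlt'), w, hw, Or.inr rfl, Or.inl h⟩
      · exact hnr2 ⟨hbw, w, hw, Or.inl h, Or.inr rfl⟩
  · intro h
    exact Or.inl ⟨fun h' => hirr b (h' ▸ h), w, hw, Or.inr rfl, Or.inl h⟩
end
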